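/- arXiv:1604.05060 — 3 statements merged into one kernel-verified Lean document; each statement's English description precedes it below -/
import Mathlib

section
/- Let p, q be unit quaternions, and let Z = (U,V) and Z' = (U',V') be tangent vectors to S³×S³ at (p,q). Then the almost product structure P(U,V) = (pq⁻¹V, qp⁻¹U) satisfies: (a) P(P(Z)) = Z (P is involutive); (b) P(J(Z)) = −J(P(Z)) (P and J anti-commute); (c) g(PZ, PZ') = g(Z, Z') (P is compatible with g); (d) g(PZ, Z') = g(Z, PZ') (P is symmetric with respect to g). Moreover P(Z) is again a tangent vector to S³×S³ at (p,q). -/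
/-!
At `(p, q)` the map `P` swaps the two factors and multiplies on the left by `u = p q⁻¹`, resp.
`u⁻¹ = q p⁻¹`. When `‖p‖ = ‖q‖`, `u` is a unit quaternion, so left multiplication by `u` is an
isometry of `ℍ` whose adjoint is left multiplication by `star u = u⁻¹`; together with
`p⁻¹ u = q⁻¹` this matches the terms of `g(PZ, ·)` with those of `g(Z, P ·)` one by one.
-/

open Quaternion

noncomputable section

/-- Euclidean inner product on ℍ ≅ ℝ⁴: ⟨a,b⟩ = Re(a · conj b). -/
def innQ (a b : ℍ[ℝ]) : ℝ := (a * star b).re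

/-- Euclidean product inner product on ℍ × ℍ. -/
def innP (Z Z' : ℍ[ℝ] × ℍ[ℝ]) : ℝ := innQ Z.1 Z'.1 + innQ Z.2 Z'.2

/-- Tangency to S³ × S³ at (p,q). -/
def Tangent (p q : ℍ[ℝ]) (Z : ℍ[ℝ] × ℍ[ℝ]) : Prop :=
  (p⁻¹ * Z.1).re = 0 ∧ (q⁻¹ * Z.2).re = 0

/-- The almost complex structure J of the nearly Kähler S³×S³ at the point (p,q). -/
def Jmap (p q : ℍ[ℝ]) (Z : ℍ[ℝ] × ℍ[ℝ]) : ℍ[ℝ] × ℍ[ℝ] :=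
  (Real.sqrt 3)⁻¹ •
    ((2 * (p * q⁻¹ * Z.2) - Z.1, -(2 * (q * p⁻¹ * Z.1)) + Z.2) : ℍ[ℝ] × ℍ[ℝ])

/-- The nearly Kähler metric g at the point (p,q). -/
def gmet (p q : ℍ[ℝ]) (Z Z' : ℍ[ℝ] × ℍ[ℝ]) : ℝ :=
  (4/3) * (innQ Z.1 Z'.1 + innQ Z.2 Z'.2)
    - (2/3) * (innQ (p⁻¹ * Z.1) (q⁻¹ * Z'.2) + innQ (p⁻¹ * Z'.1) (q⁻¹ * Z.2))

/-- The almost product structure P at the point (p,q). -/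
def Pmap (p q : ℍ[ℝ]) (Z : ℍ[ℝ] × ℍ[ℝ]) : ℍ[ℝ] × ℍ[ℝ] :=
  (p * q⁻¹ * Z.2, q * p⁻¹ * Z.1)

/-- The usual product structure Q. -/
def Qmap (Z : ℍ[ℝ] × ℍ[ℝ]) : ℍ[ℝ] × ℍ[ℝ] := (-Z.1, Z.2)

/-- The quaternion units i, j, k. -/
def qi : ℍ[ℝ] := ⟨0, 1, 0, 0⟩
def qj : ℍ[ℝ] := ⟨0, 0, 1, 0⟩
def qk : ℍ[ℝ] := ⟨0, 0, 0, 1⟩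

open scoped RealInnerProductSpace

lemma innQ_eq_inner (a b : ℍ[ℝ]) : innQ a b = ⟪a, b⟫ := rfl

lemma innQ_comm (a b : ℍ[ℝ]) : innQ a b = innQ b a := real_inner_comm b a

lemma innQ_mul_left (a x y : ℍ[ℝ]) : innQ (a * x) y = innQ x (star a * y) := by
  simp only [innQ, re_mul, imI_mul, imJ_mul, imK_mul, re_star, imI_star, imJ_star, imK_star,
    star_mul]
  ring

lemma innQ_mul_mul_left (a x y : ℍ[ℝ]) : innQ (a * x) (a * y) = normSq a * innQ x y := by
  rw [innQ_mul_left, ← mul_assoc, star_mul_self, coe_mul_eq_smul, innQ_eq_inner,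
    innQ_eq_inner, real_inner_smul_right]

lemma star_eq_inv_of_normSq_eq_one {u : ℍ[ℝ]} (hu : normSq u = 1) : star u = u⁻¹ := by
  rw [inv_def, hu, inv_one, one_smul]

lemma Pmap_Jmap (p q : ℍ[ℝ]) (Z : ℍ[ℝ] × ℍ[ℝ]) :
    Pmap p q (Jmap p q Z) = -Jmap p q (Pmap p q Z) := by
  simp only [Pmap, Jmap, Prod.smul_mk, Prod.neg_mk, Prod.mk.injEq, mul_assoc, two_mul, mul_add,
    mul_sub, mul_neg, Algebra.mul_smul_comm]
  constructor <;> module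

section AlmostProduct

variable {p q : ℍ[ℝ]}

lemma normSq_mul_inv_of_norm_eq (hpq : ‖p‖ = ‖q‖) (hq : q ≠ 0) : normSq (p * q⁻¹) = 1 := by
  simp [normSq_eq_norm_mul_self, hpq, hq]

lemma star_mul_inv_of_norm_eq (hpq : ‖p‖ = ‖q‖) (hq : q ≠ 0) : star (p * q⁻¹) = q * p⁻¹ := by
  rw [star_eq_inv_of_normSq_eq_one (normSq_mul_inv_of_norm_eq hpq hq), mul_inv_rev, inv_inv]

lemma Pmap_Pmap (hp : p ≠ 0) (hq : q ≠ 0) (Z : ℍ[ℝ] × ℍ[ℝ]) : Pmap p q (Pmap p q Z) = Z := by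
  simp [Pmap, mul_assoc, hp, hq]

lemma tangent_Pmap (hp : p ≠ 0) (hq : q ≠ 0) {Z : ℍ[ℝ] × ℍ[ℝ]} (hZ : Tangent p q Z) :
    Tangent p q (Pmap p q Z) :=
  ⟨by simpa [Pmap, mul_assoc, hp] using hZ.2, by simpa [Pmap, mul_assoc, hq] using hZ.1⟩

lemma gmet_Pmap_Pmap (hpq : ‖p‖ = ‖q‖) (hq : q ≠ 0) (Z Z' : ℍ[ℝ] × ℍ[ℝ]) :
    gmet p q (Pmap p q Z) (Pmap p q Z') = gmet p q Z Z' := by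
  have hp : p ≠ 0 := ne_zero_of_norm_ne_zero (hpq ▸ norm_ne_zero_iff.2 hq)
  simp only [gmet, Pmap]
  rw [innQ_mul_mul_left, innQ_mul_mul_left, normSq_mul_inv_of_norm_eq hpq hq,
    normSq_mul_inv_of_norm_eq hpq.symm hp]
  simp only [mul_assoc, inv_mul_cancel_left₀ hp, inv_mul_cancel_left₀ hq]
  rw [innQ_comm (q⁻¹ * Z.2), innQ_comm (q⁻¹ * Z'.2)]
  ring

lemma gmet_Pmap_left (hpq : ‖p‖ = ‖q‖) (hq : q ≠ 0) (Z Z' : ℍ[ℝ] × ℍ[ℝ]) :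
    gmet p q (Pmap p q Z) Z' = gmet p q Z (Pmap p q Z') := by
  have hp : p ≠ 0 := ne_zero_of_norm_ne_zero (hpq ▸ norm_ne_zero_iff.2 hq)
  simp only [gmet, Pmap]
  rw [innQ_mul_left, innQ_mul_left, star_mul_inv_of_norm_eq hpq hq,
    star_mul_inv_of_norm_eq hpq.symm hp]
  simp only [mul_assoc, inv_mul_cancel_left₀ hp, inv_mul_cancel_left₀ hq]
  rw [innQ_comm (q⁻¹ * Z.2), innQ_comm (p⁻¹ * Z'.1), innQ_comm Z.2, innQ_comm Z.1]
  ring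

end AlmostProduct

theorem stmt_4_general (p q : ℍ[ℝ]) (hp : ‖p‖ = 1) (hq : ‖q‖ = 1)
    (Z Z' : ℍ[ℝ] × ℍ[ℝ]) (hZ : Tangent p q Z) :
    Pmap p q (Pmap p q Z) = Z ∧
    Pmap p q (Jmap p q Z) = -(Jmap p q (Pmap p q Z)) ∧
    gmet p q (Pmap p q Z) (Pmap p q Z') = gmet p q Z Z' ∧
    gmet p q (Pmap p q Z) Z' = gmet p q Z (Pmap p q Z') ∧
    Tangent p q (Pmap p q Z) := by
  have hpq : ‖p‖ = ‖q‖ := hp.trans hq.symm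
  have hp0 : p ≠ 0 := ne_zero_of_norm_ne_zero (hp ▸ one_ne_zero)
  have hq0 : q ≠ 0 := ne_zero_of_norm_ne_zero (hq ▸ one_ne_zero)
  exact ⟨Pmap_Pmap hp0 hq0 Z, Pmap_Jmap p q Z, gmet_Pmap_Pmap hpq hq0 Z Z',
    gmet_Pmap_left hpq hq0 Z Z', tangent_Pmap hp0 hq0 hZ⟩

/-- basic properties of the almost product structure P. -/
theorem stmt_4 (p q : ℍ[ℝ]) (hp : ‖p‖ = 1) (hq : ‖q‖ = 1)
    (Z Z' : ℍ[ℝ] × ℍ[ℝ]) (hZ : Tangent p q Z) (hZ' : Tangent p q Z') :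
    Pmap p q (Pmap p q Z) = Z ∧
    Pmap p q (Jmap p q Z) = -(Jmap p q (Pmap p q Z)) ∧
    gmet p q (Pmap p q Z) (Pmap p q Z') = gmet p q Z Z' ∧
    gmet p q (Pmap p q Z) Z' = gmet p q Z (Pmap p q Z') ∧
    Tangent p q (Pmap p q Z) :=
  stmt_4_general p q hp hq Z Z' hZ
end
end

section
/- Let a, b, c, p, q be unit quaternions and consider the map F : S³×S³ → S³×S³, F(p,q) = (apc⁻¹, bqc⁻¹), whose differential at (p,q) sends a tangent vector (U,V) to (aUc⁻¹, bVc⁻¹). Then F is an isometry of the nearly Kähler metric g: for all tangent vectors Z = (U,V) and Z' = (U',V') at (p,q), one has g_{F(p,q)}((aUc⁻¹, bVc⁻¹), (aU'c⁻¹, bV'c⁻¹)) = g_{(p,q)}(Z, Z'). -/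
open Quaternion

noncomputable section

/-!
Left and right multiplication by quaternions x, y scale ⟨·,·⟩ by |x|²|y|², so the flat part of g
is preserved, and (apc⁻¹)⁻¹(aUc⁻¹) = c(p⁻¹U)c⁻¹ turns the mixed part into an inner product of
c-conjugates, which conjugation by c ≠ 0 preserves.
-/

lemma re_mul_comm {R : Type*} [CommRing R] (x y : ℍ[R]) : (x * y).re = (y * x).re := by
  simp only [re_mul]; ring

lemma innQ_mul_mul (x y u v : ℍ[ℝ]) :
    innQ (x * u * y) (x * v * y) = normSq x * normSq y * innQ u v := by
  have h : x * u * y * star (x * v * y) = normSq y • (x * (u * star v) * star x) := by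
    simp only [star_mul, mul_assoc]
    rw [← mul_assoc y, self_mul_star, coe_mul_eq_smul, mul_smul_comm, mul_smul_comm]
  rw [innQ, h, re_smul, re_mul_comm, ← mul_assoc, star_mul_self, coe_mul_eq_smul, re_smul, innQ,
    smul_eq_mul, smul_eq_mul]
  ring

lemma innQ_conj {c : ℍ[ℝ]} (hc : c ≠ 0) (u v : ℍ[ℝ]) :
    innQ (c * u * c⁻¹) (c * v * c⁻¹) = innQ u v := by
  rw [innQ_mul_mul, normSq_inv, mul_inv_cancel₀ (normSq_ne_zero.mpr hc), one_mul]

lemma inv_mul_mul_mul_inv {K : Type*} [DivisionRing K] {a : K} (ha : a ≠ 0) (p c u : K) :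
    (a * p * c⁻¹)⁻¹ * (a * u * c⁻¹) = c * (p⁻¹ * u) * c⁻¹ := by
  simp only [mul_inv_rev, inv_inv, mul_assoc, inv_mul_cancel_left₀ ha]

lemma normSq_eq_one_of_norm_eq_one {x : ℍ[ℝ]} (hx : ‖x‖ = 1) : normSq x = 1 := by
  rw [normSq_eq_norm_mul_self, hx, one_mul]

lemma ne_zero_of_norm_eq_one {x : ℍ[ℝ]} (hx : ‖x‖ = 1) : x ≠ 0 :=
  norm_ne_zero_iff.mp (hx ▸ one_ne_zero)

theorem stmt_7_general (a b c p q : ℍ[ℝ])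
    (ha : ‖a‖ = 1) (hb : ‖b‖ = 1) (hc : ‖c‖ = 1)
    (Z Z' : ℍ[ℝ] × ℍ[ℝ]) :
    gmet (a * p * c⁻¹) (b * q * c⁻¹)
        (a * Z.1 * c⁻¹, b * Z.2 * c⁻¹) (a * Z'.1 * c⁻¹, b * Z'.2 * c⁻¹)
      = gmet p q Z Z' := by
  simp only [gmet, inv_mul_mul_mul_inv (ne_zero_of_norm_eq_one ha),
    inv_mul_mul_mul_inv (ne_zero_of_norm_eq_one hb), innQ_conj (ne_zero_of_norm_eq_one hc),
    innQ_mul_mul, normSq_inv, normSq_eq_one_of_norm_eq_one ha, normSq_eq_one_of_norm_eq_one hb,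
    normSq_eq_one_of_norm_eq_one hc, inv_one, one_mul]

/-- the map F(p,q) = (apc⁻¹, bqc⁻¹) is an isometry of the
nearly Kähler metric g. -/
theorem stmt_7 (a b c p q : ℍ[ℝ])
    (ha : ‖a‖ = 1) (hb : ‖b‖ = 1) (hc : ‖c‖ = 1) (hp : ‖p‖ = 1) (hq : ‖q‖ = 1)
    (Z Z' : ℍ[ℝ] × ℍ[ℝ]) (hZ : Tangent p q Z) (hZ' : Tangent p q Z') :
    gmet (a * p * c⁻¹) (b * q * c⁻¹)
        (a * Z.1 * c⁻¹, b * Z.2 * c⁻¹) (a * Z'.1 * c⁻¹, b * Z'.2 * c⁻¹)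
      = gmet p q Z Z' :=
  stmt_7_general a b c p q ha hb hc Z Z'
end
end

section
/- Let u be a unit quaternion and let i, j, k denote the imaginary quaternionic units. Consider the map f : ℍ∖{0} → ℍ×ℍ, f(u) = (u·i·u⁻¹, u·j·u⁻¹), and at the point (p,q) = (u·i·u⁻¹, u·j·u⁻¹) define T₁ = (0, 2u·k·u⁻¹), T₂ = (−2u·k·u⁻¹, 0), and T₃ = (−2u·j·u⁻¹, 2u·i·u⁻¹). Then: (i) the Fréchet derivative of f at u in the directions u·i, u·j, −u·k equals T₁, T₂, T₃ respectively; (ii) g(Tₘ, Tₙ) = (16/3)·δₘₙ for m, n ∈ {1,2,3}, so f(S³) is a round sphere of g-radius 4/√3; (iii) g(Tₘ, J(Tₙ)) = 0 for all m, n, i.e. f is a Lagrangian immersion. Here g and J are evaluated at the point (u·i·u⁻¹, u·j·u⁻¹). -/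
open Quaternion

noncomputable section

/-!
Conjugation `x ↦ u x u⁻¹` by a nonzero quaternion is an `ℝ`-algebra automorphism of `ℍ` that
preserves `⟨·,·⟩`, hence it transports the nearly Kähler data `g` and `J` at `(p, q)` to those
at `(u p u⁻¹, u q u⁻¹)`. The frame `T` at `(u i u⁻¹, u j u⁻¹)` is the conjugate of the frame at
`(i, j)`, so both the orthogonality relations and the Lagrangian condition reduce to a finite
computation at `u = 1`. The derivative of `x ↦ x a x⁻¹` at `u` sends `u e` to `u (e a - a e) u⁻¹`,
and the commutators of `i, j, k` give the frame.
-/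

def conjAlgHom (R : Type*) {A : Type*} [CommSemiring R] [DivisionRing A] [Algebra R A] (u : A)
    (hu : u ≠ 0) : A →ₐ[R] A where
  toFun x := u * x * u⁻¹
  map_one' := by simp [hu]
  map_mul' x y := by simp [mul_assoc, hu]
  map_zero' := by simp
  map_add' x y := by simp [mul_add, add_mul]
  commutes' r := by simp [Algebra.commutes, mul_assoc, hu]

theorem conjAlgHom_apply (R : Type*) {A : Type*} [CommSemiring R] [DivisionRing A] [Algebra R A]
    (u : A) (hu : u ≠ 0) (x : A) : conjAlgHom R u hu x = u * x * u⁻¹ := rfl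

section ConjDeriv

variable (𝕜 : Type*) [NontriviallyNormedField 𝕜] {R : Type*} [NormedDivisionRing R]
  [NormedAlgebra 𝕜 R]

def conjDeriv (a u : R) : R →L[𝕜] R :=
  ContinuousLinearMap.mulLeftRight 𝕜 R 1 (a * u⁻¹)
    - ContinuousLinearMap.mulLeftRight 𝕜 R (u * a * u⁻¹) u⁻¹

theorem hasFDerivAt_mul_mul_inv [CompleteSpace R] (a : R) {u : R} (hu : u ≠ 0) :
    HasFDerivAt (fun x => x * a * x⁻¹) (conjDeriv 𝕜 a u) u := by
  refine (((hasFDerivAt_id u).mul_const' a).mul' (hasFDerivAt_inv' hu)).congr_fderiv ?_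
  ext h
  simp [conjDeriv, mul_assoc, sub_eq_add_neg, add_comm]

theorem conjDeriv_apply_mul (a : R) {u : R} (hu : u ≠ 0) (e : R) :
    conjDeriv 𝕜 a u (u * e) = conjAlgHom 𝕜 u hu (e * a - a * e) := by
  rw [conjAlgHom_apply]
  simp [conjDeriv, mul_assoc, hu, mul_sub, sub_mul]

end ConjDeriv

namespace Quaternion

variable {R : Type*}

theorem re_mul_comm [CommRing R] (a b : ℍ[R]) : (a * b).re = (b * a).re := by
  simp only [re_mul]
  ring

variable [Field R] [LinearOrder R] [IsStrictOrderedRing R]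

theorem re_mul_mul_inv {u : ℍ[R]} (hu : u ≠ 0) (x : ℍ[R]) : (u * x * u⁻¹).re = x.re := by
  rw [mul_assoc, re_mul_comm, mul_assoc, inv_mul_cancel₀ hu, mul_one]

theorem star_mul_mul_inv (u x : ℍ[R]) : star (u * x * u⁻¹) = u * star x * u⁻¹ := by
  rw [star_mul, star_mul, inv_def, star_smul, star_star]
  simp only [smul_mul_assoc, mul_smul_comm, mul_assoc]

end Quaternion

theorem innQ_conjAlgHom {u : ℍ[ℝ]} (hu : u ≠ 0) (a b : ℍ[ℝ]) :
    innQ (conjAlgHom ℝ u hu a) (conjAlgHom ℝ u hu b) = innQ a b := by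
  simp only [innQ, conjAlgHom_apply, Quaternion.star_mul_mul_inv]
  rw [← Quaternion.re_mul_mul_inv hu (a * star b)]
  simp [mul_assoc, hu]

theorem gmet_map (φ : ℍ[ℝ] →ₐ[ℝ] ℍ[ℝ]) (hφ : ∀ a b, innQ (φ a) (φ b) = innQ a b)
    (p q : ℍ[ℝ]) (Z Z' : ℍ[ℝ] × ℍ[ℝ]) :
    gmet (φ p) (φ q) (Prod.map φ φ Z) (Prod.map φ φ Z') = gmet p q Z Z' := by
  simp only [gmet, Prod.map_fst, Prod.map_snd, ← map_inv₀, ← map_mul, hφ]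

theorem Jmap_map (φ : ℍ[ℝ] →ₐ[ℝ] ℍ[ℝ]) (p q : ℍ[ℝ]) (Z : ℍ[ℝ] × ℍ[ℝ]) :
    Jmap (φ p) (φ q) (Prod.map φ φ Z) = Prod.map φ φ (Jmap p q Z) := by
  simp [Jmap, map_inv₀, map_ofNat]

theorem gmet_smul_right (p q : ℍ[ℝ]) (Z W : ℍ[ℝ] × ℍ[ℝ]) (c : ℝ) :
    gmet p q Z (c • W) = c * gmet p q Z W := by
  simp only [gmet, innQ, Prod.smul_fst, Prod.smul_snd, Quaternion.star_smul, mul_smul_comm,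
    smul_mul_assoc, Quaternion.re_smul, smul_eq_mul]
  ring

theorem qi_mul_qj : qi * qj = qk := by ext <;> simp <;> simp [qi, qj, qk]
theorem qj_mul_qi : qj * qi = -qk := by ext <;> simp <;> simp [qi, qj, qk]
theorem qj_mul_qk : qj * qk = qi := by ext <;> simp <;> simp [qi, qj, qk]
theorem qk_mul_qj : qk * qj = -qi := by ext <;> simp <;> simp [qi, qj, qk]
theorem qk_mul_qi : qk * qi = qj := by ext <;> simp <;> simp [qi, qj, qk]
theorem qi_mul_qk : qi * qk = -qj := by ext <;> simp <;> simp [qi, qj, qk]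

theorem qi_inv : qi⁻¹ = -qi :=
  inv_eq_of_mul_eq_one_right <| by ext <;> simp <;> simp [qi]

theorem qj_inv : qj⁻¹ = -qj :=
  inv_eq_of_mul_eq_one_right <| by ext <;> simp <;> simp [qj]

def baseFrame : Fin 3 → ℍ[ℝ] × ℍ[ℝ] := ![(0, 2 * qk), (-(2 * qk), 0), (-(2 * qj), 2 * qi)]

theorem gmet_baseFrame (m n : Fin 3) :
    gmet qi qj (baseFrame m) (baseFrame n) = 16 / 3 * if m = n then 1 else 0 := by
  fin_cases m <;> fin_cases n <;>
    simp [gmet, innQ, baseFrame, qi_inv, qj_inv, two_mul] <;> simp [qi, qj, qk] <;> norm_num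

theorem gmet_baseFrame_Jmap (m n : Fin 3) :
    gmet qi qj (baseFrame m) (Jmap qi qj (baseFrame n)) = 0 := by
  rw [Jmap, gmet_smul_right]
  refine mul_eq_zero_of_right _ ?_
  fin_cases m <;> fin_cases n <;>
    simp [gmet, innQ, baseFrame, qi_inv, qj_inv, two_mul] <;> simp [qi, qj, qk] <;> norm_num

/-- the immersion u ↦ (uiu⁻¹, uju⁻¹) has tangent vectors T₁, T₂, T₃
(the derivatives in the directions u·i, u·j, −u·k), which form a g-orthogonal frame
of vectors of squared length 16/3, and the immersion is Lagrangian. -/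
theorem stmt_17 (u : ℍ[ℝ]) (hu : ‖u‖ = 1)
    (T : Fin 3 → ℍ[ℝ] × ℍ[ℝ])
    (hT1 : T 0 = (0, 2 * (u * qk * u⁻¹)))
    (hT2 : T 1 = (-(2 * (u * qk * u⁻¹)), 0))
    (hT3 : T 2 = (-(2 * (u * qj * u⁻¹)), 2 * (u * qi * u⁻¹))) :
    (∃ D : ℍ[ℝ] →L[ℝ] ℍ[ℝ] × ℍ[ℝ],
      HasFDerivAt (fun x : ℍ[ℝ] => ((x * qi * x⁻¹, x * qj * x⁻¹) : ℍ[ℝ] × ℍ[ℝ])) D u ∧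
      D (u * qi) = T 0 ∧ D (u * qj) = T 1 ∧ D (-(u * qk)) = T 2) ∧
    (∀ m n : Fin 3,
      gmet (u * qi * u⁻¹) (u * qj * u⁻¹) (T m) (T n)
        = (16/3) * (if m = n then 1 else 0)) ∧
    (∀ m n : Fin 3,
      gmet (u * qi * u⁻¹) (u * qj * u⁻¹) (T m)
        (Jmap (u * qi * u⁻¹) (u * qj * u⁻¹) (T n)) = 0) := by
  have hu0 : u ≠ 0 := by rintro rfl; simp at hu
  set φ := conjAlgHom ℝ u hu0 with hφ
  have hp : u * qi * u⁻¹ = φ qi := rfl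
  have hq : u * qj * u⁻¹ = φ qj := rfl
  have hk : u * qk * u⁻¹ = φ qk := rfl
  have hT : T = fun m => Prod.map φ φ (baseFrame m) := by
    funext m
    fin_cases m <;> simp [hT1, hT2, hT3, hp, hq, hk, baseFrame, map_ofNat]
  refine ⟨⟨_, (hasFDerivAt_mul_mul_inv ℝ qi hu0).prodMk (hasFDerivAt_mul_mul_inv ℝ qj hu0), ?_⟩,
    fun m n => ?_, fun m n => ?_⟩
  · rw [hT]
    simp only [ContinuousLinearMap.prod_apply, map_neg, conjDeriv_apply_mul ℝ _ hu0, ← hφ,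
      baseFrame]
    simp [qi_mul_qj, qj_mul_qi, qj_mul_qk, qk_mul_qj, qk_mul_qi, qi_mul_qk, two_mul, sub_eq_add_neg]
  · rw [hp, hq, hT, gmet_map φ (innQ_conjAlgHom hu0), gmet_baseFrame]
  · rw [hp, hq, hT, Jmap_map, gmet_map φ (innQ_conjAlgHom hu0), gmet_baseFrame_Jmap]
end
end
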